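/- arXiv:2412.07643 — 5 statements merged into one kernel-verified Lean document; each statement's English description precedes it below -/
import Mathlib

section
/- Let d ≥ 1, let 𝒞 be a symmetric positive definite d×d real matrix with B = 𝒞^{-1/2}, and let τ be a probability measure on the unit sphere 𝕊^{d-1} ⊂ ℝ^d. Set ρ = (1/2)·inf over unit vectors ζ ∈ ℝ^d of ∫_{𝕊^{d-1}} ⟨ζ, Bv/‖Bv‖⟩² dτ(v). Then for all x, x̃ ∈ ℝ^d, the synchronous coupling of two generalized Hit-and-Run transitions contracts: ( ∫_{𝕊^{d-1}} ‖Π_{Bv}(B(x - x̃))‖² dτ(v) )^{1/2} ≤ (1 - ρ)·‖B(x - x̃)‖. (Since under the synchronous coupling B(X - X̃) = Π_{Bv} B(x - x̃), this bounds the L²-Wasserstein distance, with respect to the metric |z|_{B} = ‖Bz‖, between the generalized Hit-and-Run transition distributions from x and from x̃ by (1-ρ)‖B(x-x̃)‖.) -/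
open MeasureTheory
open scoped RealInnerProductSpace

/-!
Write `u = ‖w‖⁻¹ • w` for the normalised direction (`u = 0` when `w = 0`). For every `w`,
`‖z - (⟪z, w⟫ / ‖w‖²) • w‖² = ‖z‖² - ⟪z, u⟫²`, and by homogeneity the definition of `ρ` gives
`∫ ⟪z, u⟫² ≥ 2ρ ‖z‖²`. Hence the mean squared projected distance is at most
`(1 - 2ρ) ‖z‖² ≤ (1 - ρ)² ‖z‖²`.
-/

section ProjectionContraction

variable {E : Type*} [NormedAddCommGroup E] [InnerProductSpace ℝ E]

theorem norm_sub_inner_div_smul_sq (z w : E) :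
    ‖z - (⟪z, w⟫ / ‖w‖ ^ 2) • w‖ ^ 2 = ‖z‖ ^ 2 - ⟪z, ‖w‖⁻¹ • w⟫ ^ 2 := by
  rcases eq_or_ne w 0 with rfl | hw
  · simp
  have hw' : ‖w‖ ≠ 0 := norm_ne_zero_iff.mpr hw
  rw [norm_sub_sq_real, norm_smul, real_inner_smul_right, real_inner_smul_right,
    Real.norm_eq_abs, mul_pow, sq_abs]
  field_simp
  ring

theorem inner_inv_norm_smul_sq_le (ζ w : E) : ⟪ζ, ‖w‖⁻¹ • w⟫ ^ 2 ≤ ‖ζ‖ ^ 2 := by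
  rw [← sq_abs]
  refine pow_le_pow_left₀ (abs_nonneg _) ?_ 2
  calc |⟪ζ, ‖w‖⁻¹ • w⟫| ≤ ‖ζ‖ * ‖‖w‖⁻¹ • w‖ := abs_real_inner_le_norm _ _
    _ ≤ ‖ζ‖ * 1 := by
        gcongr
        rcases eq_or_ne w 0 with rfl | hw
        · simp
        · exact (norm_smul_inv_norm hw).le
    _ = ‖ζ‖ := mul_one _

variable {α : Type*} [MeasurableSpace α] {μ : Measure α} {w : α → E}

theorem integrable_inner_inv_norm_smul_sq [IsFiniteMeasure μ] (hw : AEStronglyMeasurable w μ)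
    (ζ : E) : Integrable (fun a ↦ ⟪ζ, ‖w a‖⁻¹ • w a⟫ ^ 2) μ := by
  have hmeas : AEStronglyMeasurable (fun a ↦ ⟪ζ, ‖w a‖⁻¹ • w a⟫ ^ 2) μ :=
    (aestronglyMeasurable_const.inner
      (hw.norm.aemeasurable.inv.aestronglyMeasurable.smul hw)).pow 2
  refine (integrable_const (‖ζ‖ ^ 2)).mono' hmeas (Filter.Eventually.of_forall fun a ↦ ?_)
  rw [Real.norm_eq_abs, abs_of_nonneg (sq_nonneg _)]
  exact inner_inv_norm_smul_sq_le ζ (w a)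

theorem two_mul_mul_norm_sq_le_integral_inner_sq {ρ : ℝ}
    (hρ : ρ ≤ 1 / 2 * ⨅ ζ : {ζ : E // ‖ζ‖ = 1}, ∫ a, ⟪(ζ : E), ‖w a‖⁻¹ • w a⟫ ^ 2 ∂μ) (z : E) :
    2 * ρ * ‖z‖ ^ 2 ≤ ∫ a, ⟪z, ‖w a‖⁻¹ • w a⟫ ^ 2 ∂μ := by
  rcases eq_or_ne z 0 with rfl | hz
  · simp
  set ζ : E := ‖z‖⁻¹ • z
  have hζ : ‖ζ‖ = 1 := norm_smul_inv_norm hz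
  have hz_eq : z = ‖z‖ • ζ := by
    rw [smul_smul, mul_inv_cancel₀ (norm_ne_zero_iff.mpr hz), one_smul]
  have hbdd : BddBelow (Set.range fun ζ : {ζ : E // ‖ζ‖ = 1} ↦
      ∫ a, ⟪(ζ : E), ‖w a‖⁻¹ • w a⟫ ^ 2 ∂μ) :=
    ⟨0, by rintro _ ⟨ζ, rfl⟩; exact integral_nonneg fun a ↦ sq_nonneg _⟩
  have hρζ : 2 * ρ ≤ ∫ a, ⟪ζ, ‖w a‖⁻¹ • w a⟫ ^ 2 ∂μ := by
    have := ciInf_le hbdd ⟨ζ, hζ⟩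
    linarith
  calc 2 * ρ * ‖z‖ ^ 2 ≤ ‖z‖ ^ 2 * ∫ a, ⟪ζ, ‖w a‖⁻¹ • w a⟫ ^ 2 ∂μ := by
        nlinarith [sq_nonneg ‖z‖]
    _ = ∫ a, ⟪z, ‖w a‖⁻¹ • w a⟫ ^ 2 ∂μ := by
        rw [← integral_const_mul]
        congr 1 with a
        conv_rhs => rw [hz_eq, real_inner_smul_left, mul_pow]

theorem sqrt_integral_norm_sub_inner_div_smul_sq_le [IsProbabilityMeasure μ]
    (hw : AEStronglyMeasurable w μ) {ρ : ℝ}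
    (hρ : ρ ≤ 1 / 2 * ⨅ ζ : {ζ : E // ‖ζ‖ = 1}, ∫ a, ⟪(ζ : E), ‖w a‖⁻¹ • w a⟫ ^ 2 ∂μ) (z : E) :
    √(∫ a, ‖z - (⟪z, w a⟫ / ‖w a‖ ^ 2) • w a‖ ^ 2 ∂μ) ≤ (1 - ρ) * ‖z‖ := by
  have hint := integrable_inner_inv_norm_smul_sq hw z
  have hlower := two_mul_mul_norm_sq_le_integral_inner_sq hρ z
  have hupper : ∫ a, ⟪z, ‖w a‖⁻¹ • w a⟫ ^ 2 ∂μ ≤ ‖z‖ ^ 2 := by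
    calc ∫ a, ⟪z, ‖w a‖⁻¹ • w a⟫ ^ 2 ∂μ ≤ ∫ _, ‖z‖ ^ 2 ∂μ :=
          integral_mono hint (integrable_const _) fun a ↦ inner_inv_norm_smul_sq_le z (w a)
      _ = ‖z‖ ^ 2 := by simp
  have heq : ∫ a, ‖z - (⟪z, w a⟫ / ‖w a‖ ^ 2) • w a‖ ^ 2 ∂μ
      = ‖z‖ ^ 2 - ∫ a, ⟪z, ‖w a‖⁻¹ • w a⟫ ^ 2 ∂μ := by
    simp_rw [norm_sub_inner_div_smul_sq]
    rw [integral_sub (integrable_const _) hint, integral_const, probReal_univ, one_smul]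
  have hnonneg : 0 ≤ (1 - ρ) * ‖z‖ := by
    rcases (norm_nonneg z).eq_or_lt with hz | hz
    · rw [← hz, mul_zero]
    · have : 2 * ρ ≤ 1 :=
        le_of_mul_le_mul_right (a := ‖z‖ ^ 2) (by linarith) (by positivity)
      exact mul_nonneg (by linarith) hz.le
  rw [heq, Real.sqrt_le_left hnonneg]
  nlinarith [sq_nonneg (ρ * ‖z‖)]

end ProjectionContraction

theorem generalized_hit_and_run_contraction_general {d : ℕ}
    (B : Matrix (Fin d) (Fin d) ℝ)
    (τ : Measure (Metric.sphere (0 : EuclideanSpace ℝ (Fin d)) 1))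
    [IsProbabilityMeasure τ]
    (ρ : ℝ)
    (hρ : ρ = (1 / 2) * ⨅ ζ : {ζ : EuclideanSpace ℝ (Fin d) // ‖ζ‖ = 1},
        ∫ v, ⟪(ζ : EuclideanSpace ℝ (Fin d)),
            ‖Matrix.toEuclideanLin B ↑v‖⁻¹ • Matrix.toEuclideanLin B ↑v⟫ ^ 2 ∂τ)
    (x xt : EuclideanSpace ℝ (Fin d)) :
    Real.sqrt (∫ v, ‖Matrix.toEuclideanLin B (x - xt) -
        (⟪Matrix.toEuclideanLin B (x - xt), Matrix.toEuclideanLin B ↑v⟫ /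
            ‖Matrix.toEuclideanLin B ↑v‖ ^ 2) • Matrix.toEuclideanLin B ↑v‖ ^ 2 ∂τ) ≤
      (1 - ρ) * ‖Matrix.toEuclideanLin B (x - xt)‖ :=
  sqrt_integral_norm_sub_inner_div_smul_sq_le
    ((Matrix.toEuclideanLin B).continuous_of_finiteDimensional.comp
      continuous_subtype_val).aestronglyMeasurable
    hρ.le _

/-- Wasserstein contraction of the synchronous coupling of generalized
Hit-and-Run for the Gaussian target `N(0,𝒞)`, with `B = 𝒞^{-1/2}`:
`(∫ ‖Π_{Bv}(B(x-xt))‖² dτ(v))^{1/2} ≤ (1-ρ)·‖B(x-xt)‖`. -/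
theorem generalized_hit_and_run_contraction {d : ℕ} (hd : 1 ≤ d)
    (C B : Matrix (Fin d) (Fin d) ℝ) (hC : C.PosDef) (hB : B.PosDef)
    (hBC : B * B = C⁻¹)
    (τ : Measure (Metric.sphere (0 : EuclideanSpace ℝ (Fin d)) 1))
    [IsProbabilityMeasure τ]
    (ρ : ℝ)
    (hρ : ρ = (1 / 2) * ⨅ ζ : {ζ : EuclideanSpace ℝ (Fin d) // ‖ζ‖ = 1},
        ∫ v, ⟪(ζ : EuclideanSpace ℝ (Fin d)),
            ‖Matrix.toEuclideanLin B ↑v‖⁻¹ • Matrix.toEuclideanLin B ↑v⟫ ^ 2 ∂τ)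
    (x xt : EuclideanSpace ℝ (Fin d)) :
    Real.sqrt (∫ v, ‖Matrix.toEuclideanLin B (x - xt) -
        (⟪Matrix.toEuclideanLin B (x - xt), Matrix.toEuclideanLin B ↑v⟫ /
            ‖Matrix.toEuclideanLin B ↑v‖ ^ 2) • Matrix.toEuclideanLin B ↑v‖ ^ 2 ∂τ) ≤
      (1 - ρ) * ‖Matrix.toEuclideanLin B (x - xt)‖ :=
  generalized_hit_and_run_contraction_general B τ ρ hρ x xt
end

section
/- Let d ≥ 1, let 𝒞 be a symmetric positive definite d×d real matrix with B = 𝒞^{-1/2}, let τ be a probability measure on the unit sphere 𝕊^{d-1} ⊂ ℝ^d, and let γ_𝒞 = N(0,𝒞) be the Gaussian measure on ℝ^d obtained as the pushforward of the standard Gaussian measure under 𝒞^{1/2}. For a unit vector ζ ∈ ℝ^d define g_ζ : ℝ^d → ℝ by g_ζ(x) = ⟨ζ, Bx⟩ - ∫_{𝕊^{d-1}} (⟨Bv, Bx⟩/‖Bv‖²)·⟨ζ, Bv⟩ dτ(v) (this is the image of the function f_ζ(x) = ⟨ζ, Bx⟩ under the generalized Hit-and-Run averaging operator for target γ_𝒞).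 Then for every unit vector ζ, ( ∫_{ℝ^d} g_ζ(x)² dγ_𝒞(x) )^{1/2} ≥ 1 - 3·∫_{𝕊^{d-1}} ⟨ζ, Bv/‖Bv‖⟩² dτ(v). -/
/-!
Writing `m` for the `τ`-average of the orthogonal projections of `ζ` onto the lines `ℝ ∙ Bv`, the
function `g` is the linear functional `x ↦ ⟪ζ - m, Bx⟫`. Since `B` pushes `γ_𝒞` forward to the
standard Gaussian, whose covariance is the identity, `‖g‖_{L²(γ_𝒞)} = ‖ζ - m‖ ≥ ⟪ζ, ζ - m⟫ = 1 - ⟪ζ, m⟫`,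
and `⟪ζ, m⟫` is exactly the nonnegative integral `∫ ⟪ζ, Bv / ‖Bv‖⟫² dτ`.
-/

open MeasureTheory ProbabilityTheory
open scoped RealInnerProductSpace

/-- The standard Gaussian measure on `ℝ^d` (as Euclidean space). -/
noncomputable def stdGaussianE (d : ℕ) : Measure (EuclideanSpace ℝ (Fin d)) :=
  (Measure.pi fun _ : Fin d => gaussianReal 0 1).map
    (MeasurableEquiv.toLp 2 (Fin d → ℝ))

/-- The centered Gaussian measure `N(0,𝒞)` on `ℝ^d`, given as the pushforward of the
standard Gaussian measure under `𝒞^{1/2} = B⁻¹`, where `B = 𝒞^{-1/2}`. -/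
noncomputable def gaussianOfInvSqrtCov {d : ℕ} (B : Matrix (Fin d) (Fin d) ℝ) :
    Measure (EuclideanSpace ℝ (Fin d)) :=
  (stdGaussianE d).map (Matrix.toEuclideanLin B⁻¹)

lemma integral_inner_sq_stdGaussian {E : Type*} [NormedAddCommGroup E] [InnerProductSpace ℝ E]
    [FiniteDimensional ℝ E] [MeasurableSpace E] [BorelSpace E] (w : E) :
    ∫ z, ⟪w, z⟫ ^ 2 ∂stdGaussian E = ‖w‖ ^ 2 := by
  have h := covarianceBilin_apply IsGaussian.memLp_two_id w w (μ := stdGaussian E)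
  have h0 : ∫ z, id z ∂stdGaussian E = 0 := integral_id_stdGaussian
  rw [covarianceBilin_stdGaussian, innerSL_apply_apply, h0, real_inner_self_eq_norm_sq] at h
  simpa only [sub_zero, ← sq] using h.symm

lemma stdGaussianE_eq_stdGaussian (d : ℕ) :
    stdGaussianE d = stdGaussian (EuclideanSpace ℝ (Fin d)) :=
  map_pi_eq_stdGaussian

lemma map_toEuclideanLin_gaussianOfInvSqrtCov {d : ℕ} {B : Matrix (Fin d) (Fin d) ℝ}
    (hB : IsUnit B) :
    (gaussianOfInvSqrtCov B).map (Matrix.toEuclideanLin B) = stdGaussianE d := by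
  have hBB : B * B⁻¹ = 1 := Matrix.mul_nonsing_inv B ((Matrix.isUnit_iff_isUnit_det B).mp hB)
  rw [gaussianOfInvSqrtCov, Measure.map_map (by fun_prop) (by fun_prop)]
  convert Measure.map_id
  ext x : 1
  simp [Matrix.toLpLin_apply, Matrix.mulVec_mulVec, hBB]

lemma integral_inner_toEuclideanLin_sq_gaussianOfInvSqrtCov {d : ℕ}
    {B : Matrix (Fin d) (Fin d) ℝ} (hB : IsUnit B) (w : EuclideanSpace ℝ (Fin d)) :
    ∫ x, ⟪w, Matrix.toEuclideanLin B x⟫ ^ 2 ∂gaussianOfInvSqrtCov B = ‖w‖ ^ 2 := by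
  rw [← integral_inner_sq_stdGaussian, ← stdGaussianE_eq_stdGaussian,
    ← map_toEuclideanLin_gaussianOfInvSqrtCov hB, integral_map (by fun_prop) (by fun_prop)]

lemma norm_inner_div_norm_sq_smul_le {E : Type*} [NormedAddCommGroup E] [InnerProductSpace ℝ E]
    (ζ x : E) : ‖(⟪ζ, x⟫ / ‖x‖ ^ 2) • x‖ ≤ ‖ζ‖ := by
  rcases eq_or_ne x 0 with rfl | hx
  · simp
  have hx' : 0 < ‖x‖ := norm_pos_iff.mpr hx
  calc ‖(⟪ζ, x⟫ / ‖x‖ ^ 2) • x‖ = ‖⟪ζ, x⟫‖ / ‖x‖ := by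
        rw [norm_smul, norm_div, norm_pow, norm_norm]
        field_simp
    _ ≤ ‖ζ‖ := (div_le_iff₀ hx').mpr (norm_inner_le_norm ζ x)

section MeanLineProjection

variable {α E : Type*} [MeasurableSpace α] [NormedAddCommGroup E] [InnerProductSpace ℝ E]
  (τ : Measure α) (b : α → E) (ζ : E)

/-- The `τ`-average of the orthogonal projections of `ζ` onto the lines `ℝ ∙ b a`. -/
noncomputable def meanLineProjection : E :=
  ∫ a, (⟪ζ, b a⟫ / ‖b a‖ ^ 2) • b a ∂τ

variable {τ b}

lemma integrable_inner_div_norm_sq_smul [IsFiniteMeasure τ] (hb : AEStronglyMeasurable b τ) :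
    Integrable (fun a => (⟪ζ, b a⟫ / ‖b a‖ ^ 2) • b a) τ :=
  .of_bound (((aestronglyMeasurable_const.inner hb).aemeasurable.div
    (hb.norm.aemeasurable.pow_const 2)).aestronglyMeasurable.smul hb) ‖ζ‖
    (.of_forall fun a => norm_inner_div_norm_sq_smul_le ζ (b a))

variable [CompleteSpace E]

lemma integral_inner_div_norm_sq_mul_inner [IsFiniteMeasure τ] (hb : AEStronglyMeasurable b τ)
    (y : E) :
    ∫ a, ⟪b a, y⟫ / ‖b a‖ ^ 2 * ⟪ζ, b a⟫ ∂τ = ⟪meanLineProjection τ b ζ, y⟫ := by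
  rw [meanLineProjection, real_inner_comm,
    ← integral_inner (integrable_inner_div_norm_sq_smul ζ hb) y]
  congr 1 with a
  rw [real_inner_smul_right, real_inner_comm y]
  ring

lemma integral_inner_inv_norm_smul_sq [IsFiniteMeasure τ] (hb : AEStronglyMeasurable b τ) :
    ∫ a, ⟪ζ, ‖b a‖⁻¹ • b a⟫ ^ 2 ∂τ = ⟪ζ, meanLineProjection τ b ζ⟫ := by
  rw [meanLineProjection, ← integral_inner (integrable_inner_div_norm_sq_smul ζ hb) ζ]
  congr 1 with a
  rw [real_inner_smul_right, real_inner_smul_right]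
  ring

end MeanLineProjection

lemma one_sub_inner_le_norm_sub {E : Type*} [NormedAddCommGroup E] [InnerProductSpace ℝ E]
    {ζ : E} (hζ : ‖ζ‖ = 1) (m : E) : 1 - ⟪ζ, m⟫ ≤ ‖ζ - m‖ := by
  have h := real_inner_le_norm ζ (ζ - m)
  rwa [inner_sub_right, real_inner_self_eq_norm_sq, hζ, one_pow, one_mul] at h

theorem averaging_operator_lower_bound_general {d : ℕ}
    (B : Matrix (Fin d) (Fin d) ℝ) (hB : B.PosDef)
    (τ : Measure (Metric.sphere (0 : EuclideanSpace ℝ (Fin d)) 1))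
    [IsProbabilityMeasure τ]
    (ζ : EuclideanSpace ℝ (Fin d)) (hζ : ‖ζ‖ = 1)
    (g : EuclideanSpace ℝ (Fin d) → ℝ)
    (hg : ∀ x, g x = ⟪ζ, Matrix.toEuclideanLin B x⟫ -
      ∫ v, (⟪Matrix.toEuclideanLin B ↑v, Matrix.toEuclideanLin B x⟫ /
          ‖Matrix.toEuclideanLin B ↑v‖ ^ 2) * ⟪ζ, Matrix.toEuclideanLin B ↑v⟫ ∂τ) :
    Real.sqrt (∫ x, g x ^ 2 ∂gaussianOfInvSqrtCov B) ≥
      1 - 3 * ∫ v, ⟪ζ, ‖Matrix.toEuclideanLin B ↑v‖⁻¹ •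
        Matrix.toEuclideanLin B ↑v⟫ ^ 2 ∂τ := by
  set b : Metric.sphere (0 : EuclideanSpace ℝ (Fin d)) 1 → EuclideanSpace ℝ (Fin d) :=
    fun v => Matrix.toEuclideanLin B v
  have hb : AEStronglyMeasurable b τ :=
    ((Matrix.toEuclideanLin B).continuous_of_finiteDimensional.comp
      continuous_subtype_val).aestronglyMeasurable
  set m := meanLineProjection τ b ζ
  have hg_linear : g = fun x => ⟪ζ - m, Matrix.toEuclideanLin B x⟫ := funext fun x => by
    rw [hg, integral_inner_div_norm_sq_mul_inner ζ hb, inner_sub_left]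
  have hJ := integral_inner_inv_norm_smul_sq ζ hb
  have hJ_nonneg : 0 ≤ ⟪ζ, m⟫ := hJ ▸ integral_nonneg fun _ => sq_nonneg _
  rw [hg_linear, integral_inner_toEuclideanLin_sq_gaussianOfInvSqrtCov hB.isUnit,
    Real.sqrt_sq (norm_nonneg _), hJ]
  linarith [one_sub_inner_le_norm_sub hζ m]

/-- sharpness of the Wasserstein contraction rate: lower bound on the
`L²(γ_𝒞)`-norm of the generalized Hit-and-Run averaging operator applied to the linear
test function `f_ζ(x) = ⟨ζ, Bx⟩`. -/
theorem averaging_operator_lower_bound {d : ℕ} (hd : 1 ≤ d)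
    (C B : Matrix (Fin d) (Fin d) ℝ) (hC : C.PosDef) (hB : B.PosDef)
    (hBC : B * B = C⁻¹)
    (τ : Measure (Metric.sphere (0 : EuclideanSpace ℝ (Fin d)) 1))
    [IsProbabilityMeasure τ]
    (ζ : EuclideanSpace ℝ (Fin d)) (hζ : ‖ζ‖ = 1)
    (g : EuclideanSpace ℝ (Fin d) → ℝ)
    (hg : ∀ x, g x = ⟪ζ, Matrix.toEuclideanLin B x⟫ -
      ∫ v, (⟪Matrix.toEuclideanLin B ↑v, Matrix.toEuclideanLin B x⟫ /
          ‖Matrix.toEuclideanLin B ↑v‖ ^ 2) * ⟪ζ, Matrix.toEuclideanLin B ↑v⟫ ∂τ) :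
    Real.sqrt (∫ x, g x ^ 2 ∂gaussianOfInvSqrtCov B) ≥
      1 - 3 * ∫ v, ⟪ζ, ‖Matrix.toEuclideanLin B ↑v‖⁻¹ •
        Matrix.toEuclideanLin B ↑v⟫ ^ 2 ∂τ :=
  averaging_operator_lower_bound_general B hB τ ζ hζ g hg
end

section
/- Let d ≥ 1, let μ : ℝ^d → [0,∞) be a Lebesgue-measurable integrable function, and let τ be a probability measure on the unit sphere 𝕊^{d-1} ⊂ ℝ^d. For x ∈ ℝ^d and v ∈ 𝕊^{d-1} set Z(x,v) = ∫_ℝ μ(x + s·v) ds, and define K(x,v,h) = μ(x)·μ(x + h·v)/Z(x,v) whenever 0 < Z(x,v) < ∞, and K(x,v,h) = 0 otherwise. Then for all Borel sets A, B ⊂ ℝ^d, ∫_{ℝ^d} ∫_{𝕊^{d-1}} ∫_ℝ 1_A(x)·1_B(x + h·v)·K(x,v,h) dh dτ(v) dx = ∫_{ℝ^d} ∫_{𝕊^{d-1}} ∫_ℝ 1_B(x)·1_A(x + h·v)·K(x,v,h) dh dτ(v) dx. (This is the reversibility of the generalized Hit-and-Run transition kernel with respect to the target measure with density μ.) -/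
/-!
For a fixed direction `w`, the change of variables `(x, h) ↦ (x + h • w, -h)` is a
measure-preserving involution of `E × ℝ` (a translation in `x` followed by a reflection in `h`),
and it leaves the kernel invariant: the normalizer `Z(·, w)` is constant along the line
`x + ℝ • w`, and `μ x * μ (x + h • w)` is symmetric in the two endpoints. It therefore carries
the flux from `A` to `B` onto the flux from `B` to `A`; integrating over `τ` gives the theorem.
All integrands are nonnegative and the flux leaving `x` has mass at most `μ x`, so the iterated
Bochner integrals are the `toReal` of the corresponding iterated lower Lebesgue integrals.
-/

open MeasureTheory
open scoped ENNReal

theorem lintegral_lintegral_add_smul_neg {E : Type*} [NormedAddCommGroup E] [NormedSpace ℝ E]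
    [MeasurableSpace E] [BorelSpace E] {ν : Measure E} [SFinite ν] [ν.IsAddRightInvariant]
    (w : E) {G : E → ℝ → ℝ≥0∞} (hG : Measurable (Function.uncurry G)) :
    ∫⁻ x, ∫⁻ h : ℝ, G (x + h • w) (-h) ∂volume ∂ν = ∫⁻ x, ∫⁻ h : ℝ, G x h ∂volume ∂ν := by
  have hG' : Measurable (Function.uncurry fun x (h : ℝ) => G (x + h • w) (-h)) :=
    hG.comp (by fun_prop : Continuous fun p : E × ℝ => (p.1 + p.2 • w, -p.2)).measurable
  rw [lintegral_lintegral_swap hG'.aemeasurable, lintegral_lintegral_swap hG.aemeasurable]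
  calc ∫⁻ h, ∫⁻ x, G (x + h • w) (-h) ∂ν = ∫⁻ h, ∫⁻ x, G x (-h) ∂ν := by
        congr with h
        exact lintegral_add_right_eq_self (fun x => G x (-h)) (h • w)
    _ = ∫⁻ h, ∫⁻ x, G x h ∂ν := lintegral_neg_eq_self (fun h => ∫⁻ x, G x h ∂ν)

theorem integral_integral_integral_eq_toReal_lintegral {X Y T : Type*} [MeasurableSpace X]
    [MeasurableSpace Y] [MeasurableSpace T] {ν : Measure X} {τ : Measure Y} [IsFiniteMeasure τ]
    {ρ : Measure T} [SFinite ρ] {F : X → Y → T → ℝ}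
    (hF : Measurable fun p : X × Y × T => F p.1 p.2.1 p.2.2) (hF0 : ∀ x y t, 0 ≤ F x y t)
    {C : X → ℝ≥0∞} (hC : ∀ x, C x ≠ ∞) (hFC : ∀ x y, ∫⁻ t, ENNReal.ofReal (F x y t) ∂ρ ≤ C x) :
    ∫ x, ∫ y, ∫ t, F x y t ∂ρ ∂τ ∂ν =
      (∫⁻ x, ∫⁻ y, ∫⁻ t, ENNReal.ofReal (F x y t) ∂ρ ∂τ ∂ν).toReal := by
  set J : X → Y → ℝ≥0∞ := fun x y => ∫⁻ t, ENNReal.ofReal (F x y t) ∂ρ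
  have hJ : Measurable (Function.uncurry J) :=
    (ENNReal.measurable_ofReal.comp (hF.comp
      (by fun_prop : Measurable fun q : (X × Y) × T => (q.1.1, q.1.2, q.2)))).lintegral_prod_right'
  have hJC : ∀ x, ∫⁻ y, J x y ∂τ < ∞ := fun x =>
    calc ∫⁻ y, J x y ∂τ ≤ ∫⁻ _, C x ∂τ := lintegral_mono (hFC x)
      _ < ∞ := by rw [lintegral_const]; exact ENNReal.mul_lt_top (hC x).lt_top (measure_lt_top τ _)
  have h_inner : ∀ x y, ∫ t, F x y t ∂ρ = (J x y).toReal := fun x y =>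
    integral_eq_lintegral_of_nonneg_ae (ae_of_all _ (hF0 x y))
      (hF.comp (by fun_prop : Measurable fun t : T => (x, y, t))).aestronglyMeasurable
  have h_middle : ∀ x, ∫ y, (J x y).toReal ∂τ = (∫⁻ y, J x y ∂τ).toReal := fun x =>
    integral_toReal (hJ.comp measurable_prodMk_left).aemeasurable
      (ae_of_all _ fun y => (hFC x y).trans_lt (hC x).lt_top)
  simp_rw [h_inner, h_middle]
  exact integral_toReal hJ.lintegral_prod_right'.aemeasurable (ae_of_all _ hJC)

theorem add_smul_add_neg_smul {E : Type*} [AddCommGroup E] [Module ℝ E] (x w : E) (h : ℝ) :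
    x + h • w + (-h) • w = x := by
  rw [neg_smul, add_neg_cancel_right]

namespace HitAndRun

section Algebraic

variable {E : Type*} [AddCommGroup E] [Module ℝ E]

noncomputable def normalizer (μ : E → ℝ) (x w : E) : ℝ≥0∞ :=
  ∫⁻ s : ℝ, ENNReal.ofReal (μ (x + s • w))

noncomputable def kernel (μ : E → ℝ) (x w : E) (h : ℝ) : ℝ :=
  if 0 < normalizer μ x w ∧ normalizer μ x w < ∞ then
    μ x * μ (x + h • w) / (normalizer μ x w).toReal
  else 0

noncomputable def flux (μ : E → ℝ) (A B : Set E) (x w : E) (h : ℝ) : ℝ :=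
  A.indicator (fun _ => 1) x * B.indicator (fun _ => 1) (x + h • w) * kernel μ x w h

theorem normalizer_add_smul (μ : E → ℝ) (x w : E) (h : ℝ) :
    normalizer μ (x + h • w) w = normalizer μ x w := by
  have hshift : ∀ s : ℝ, x + h • w + s • w = x + (s + h) • w := fun s => by
    rw [add_smul]; abel
  simp only [normalizer, hshift]
  exact lintegral_add_right_eq_self (fun s => ENNReal.ofReal (μ (x + s • w))) h

theorem kernel_add_smul_neg (μ : E → ℝ) (x w : E) (h : ℝ) :
    kernel μ (x + h • w) w (-h) = kernel μ x w h := by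
  simp only [kernel, normalizer_add_smul, add_smul_add_neg_smul, mul_comm (μ (x + h • w))]

theorem flux_add_smul_neg (μ : E → ℝ) (A B : Set E) (x w : E) (h : ℝ) :
    flux μ B A (x + h • w) w (-h) = flux μ A B x w h := by
  simp only [flux, kernel_add_smul_neg, add_smul_add_neg_smul]
  ring

variable {μ : E → ℝ}

theorem kernel_nonneg (hμ : ∀ x, 0 ≤ μ x) (x w : E) (h : ℝ) : 0 ≤ kernel μ x w h := by
  unfold kernel
  split_ifs
  exacts [div_nonneg (mul_nonneg (hμ _) (hμ _)) ENNReal.toReal_nonneg, le_rfl]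

theorem flux_nonneg (hμ : ∀ x, 0 ≤ μ x) (A B : Set E) (x w : E) (h : ℝ) :
    0 ≤ flux μ A B x w h :=
  mul_nonneg (mul_nonneg (Set.indicator_nonneg (fun _ _ => zero_le_one) _)
    (Set.indicator_nonneg (fun _ _ => zero_le_one) _)) (kernel_nonneg hμ x w h)

theorem flux_le_kernel (hμ : ∀ x, 0 ≤ μ x) (A B : Set E) (x w : E) (h : ℝ) :
    flux μ A B x w h ≤ kernel μ x w h := by
  have hind : ∀ (C : Set E) y, C.indicator (fun _ => (1 : ℝ)) y ≤ 1 := fun C y =>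
    Set.indicator_apply_le' (fun _ => le_rfl) (fun _ => zero_le_one)
  exact mul_le_of_le_one_left (kernel_nonneg hμ x w h)
    (mul_le_one₀ (hind A x) (Set.indicator_nonneg (fun _ _ => zero_le_one) _) (hind B _))

theorem lintegral_kernel_le (hμ : ∀ x, 0 ≤ μ x) (x w : E) :
    ∫⁻ h, ENNReal.ofReal (kernel μ x w h) ≤ ENNReal.ofReal (μ x) := by
  by_cases hN : 0 < normalizer μ x w ∧ normalizer μ x w < ∞
  · obtain ⟨hpos, hfin⟩ := hN
    have hZ : 0 < (normalizer μ x w).toReal := ENNReal.toReal_pos hpos.ne' hfin.ne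
    calc ∫⁻ h, ENNReal.ofReal (kernel μ x w h)
        = ∫⁻ h, ENNReal.ofReal (μ x / (normalizer μ x w).toReal) *
            ENNReal.ofReal (μ (x + h • w)) := by
          congr with h
          rw [kernel, if_pos ⟨hpos, hfin⟩, mul_div_right_comm,
            ENNReal.ofReal_mul (div_nonneg (hμ x) hZ.le)]
      _ = ENNReal.ofReal (μ x) / normalizer μ x w * normalizer μ x w := by
          rw [lintegral_const_mul' _ _ ENNReal.ofReal_ne_top, ENNReal.ofReal_div_of_pos hZ,
            ENNReal.ofReal_toReal hfin.ne, normalizer]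
      _ ≤ ENNReal.ofReal (μ x) := (ENNReal.div_mul_cancel hpos.ne' hfin.ne).le
  · simp [kernel, if_neg hN]

theorem lintegral_flux_le (hμ : ∀ x, 0 ≤ μ x) (A B : Set E) (x w : E) :
    ∫⁻ h, ENNReal.ofReal (flux μ A B x w h) ≤ ENNReal.ofReal (μ x) :=
  (lintegral_mono fun h => ENNReal.ofReal_le_ofReal (flux_le_kernel hμ A B x w h)).trans
    (lintegral_kernel_le hμ x w)

end Algebraic

section Measure

variable {E : Type*} [NormedAddCommGroup E] [NormedSpace ℝ E] [MeasurableSpace E] [BorelSpace E]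
  [SecondCountableTopology E] {μ : E → ℝ}

theorem measurable_normalizer (hμ : Measurable μ) :
    Measurable fun p : E × E => normalizer μ p.1 p.2 :=
  (ENNReal.measurable_ofReal.comp (hμ.comp
    (by fun_prop : Measurable fun q : (E × E) × ℝ => q.1.1 + q.2 • q.1.2))).lintegral_prod_right'

theorem measurable_kernel (hμ : Measurable μ) :
    Measurable fun p : E × E × ℝ => kernel μ p.1 p.2.1 p.2.2 := by
  have hN : Measurable fun p : E × E × ℝ => normalizer μ p.1 p.2.1 :=
    (measurable_normalizer hμ).comp (by fun_prop : Measurable fun p : E × E × ℝ => (p.1, p.2.1))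
  exact Measurable.ite ((measurableSet_lt measurable_const hN).inter
    (measurableSet_lt hN measurable_const)) (by fun_prop) measurable_const

theorem measurable_flux (hμ : Measurable μ) {A B : Set E} (hA : MeasurableSet A)
    (hB : MeasurableSet B) : Measurable fun p : E × E × ℝ => flux μ A B p.1 p.2.1 p.2.2 :=
  (((measurable_const.indicator hA).comp measurable_fst).mul
    ((measurable_const.indicator hB).comp
      (by fun_prop : Measurable fun p : E × E × ℝ => p.1 + p.2.2 • p.2.1))).mul
    (measurable_kernel hμ)

theorem lintegral_lintegral_flux_comm (hμ : Measurable μ) {A B : Set E} (hA : MeasurableSet A)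
    (hB : MeasurableSet B) (ν : Measure E) [SFinite ν] [ν.IsAddRightInvariant] (w : E) :
    ∫⁻ x, ∫⁻ h : ℝ, ENNReal.ofReal (flux μ A B x w h) ∂volume ∂ν =
      ∫⁻ x, ∫⁻ h : ℝ, ENNReal.ofReal (flux μ B A x w h) ∂volume ∂ν := by
  rw [← lintegral_lintegral_add_smul_neg w (G := fun x h => ENNReal.ofReal (flux μ B A x w h))
    (ENNReal.measurable_ofReal.comp ((measurable_flux hμ hB hA).comp
      (by fun_prop : Measurable fun p : E × ℝ => (p.1, w, p.2))))]
  simp only [flux_add_smul_neg]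

theorem lintegral_lintegral_lintegral_flux_comm (hμ : Measurable μ) {A B : Set E}
    (hA : MeasurableSet A) (hB : MeasurableSet B) (ν : Measure E) [SFinite ν]
    [ν.IsAddRightInvariant] {V : Type*} [MeasurableSpace V] (τ : Measure V) [SFinite τ]
    {dir : V → E} (hdir : Measurable dir) :
    ∫⁻ x, ∫⁻ v, ∫⁻ h : ℝ, ENNReal.ofReal (flux μ A B x (dir v) h) ∂volume ∂τ ∂ν =
      ∫⁻ x, ∫⁻ v, ∫⁻ h : ℝ, ENNReal.ofReal (flux μ B A x (dir v) h) ∂volume ∂τ ∂ν := by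
  have hJ : ∀ {C D : Set E}, MeasurableSet C → MeasurableSet D →
      Measurable (Function.uncurry fun x v =>
        ∫⁻ h : ℝ, ENNReal.ofReal (flux μ C D x (dir v) h)) := fun hC hD =>
    Measurable.lintegral_prod_right' <| ENNReal.measurable_ofReal.comp <|
      (measurable_flux hμ hC hD).comp
        (by fun_prop : Measurable fun q : (E × V) × ℝ => (q.1.1, dir q.1.2, q.2))
  rw [lintegral_lintegral_swap (hJ hA hB).aemeasurable,
    lintegral_lintegral_swap (hJ hB hA).aemeasurable]
  exact lintegral_congr fun v => lintegral_lintegral_flux_comm hμ hA hB ν (dir v)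

end Measure

end HitAndRun

theorem generalized_hit_and_run_reversible_general {d : ℕ}
    (μ : EuclideanSpace ℝ (Fin d) → ℝ) (hμmeas : Measurable μ)
    (hμnn : ∀ x, 0 ≤ μ x)
    (τ : Measure (Metric.sphere (0 : EuclideanSpace ℝ (Fin d)) 1))
    [IsProbabilityMeasure τ]
    (Z : EuclideanSpace ℝ (Fin d) → Metric.sphere (0 : EuclideanSpace ℝ (Fin d)) 1 → ℝ≥0∞)
    (hZ : ∀ x v, Z x v = ∫⁻ s : ℝ, ENNReal.ofReal (μ (x + s • (↑v : EuclideanSpace ℝ (Fin d)))))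
    (K : EuclideanSpace ℝ (Fin d) → Metric.sphere (0 : EuclideanSpace ℝ (Fin d)) 1 → ℝ → ℝ)
    (hK : ∀ x v h, K x v h =
      if 0 < Z x v ∧ Z x v < ⊤ then
        μ x * μ (x + h • (↑v : EuclideanSpace ℝ (Fin d))) / (Z x v).toReal
      else 0)
    (A B : Set (EuclideanSpace ℝ (Fin d))) (hA : MeasurableSet A) (hB : MeasurableSet B) :
    ∫ x, ∫ v, ∫ h : ℝ,
        A.indicator (fun _ => (1 : ℝ)) x *
          B.indicator (fun _ => (1 : ℝ)) (x + h • (↑v : EuclideanSpace ℝ (Fin d))) *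
          K x v h ∂volume ∂τ ∂volume =
      ∫ x, ∫ v, ∫ h : ℝ,
        B.indicator (fun _ => (1 : ℝ)) x *
          A.indicator (fun _ => (1 : ℝ)) (x + h • (↑v : EuclideanSpace ℝ (Fin d))) *
          K x v h ∂volume ∂τ ∂volume := by
  have hK' : ∀ x v h, K x v h = HitAndRun.kernel μ x v h := fun x v h => by rw [hK, hZ]; rfl
  have h_toReal : ∀ {C D}, MeasurableSet C → MeasurableSet D →
      ∫ x, ∫ v, ∫ h : ℝ, HitAndRun.flux μ C D x (↑v) h ∂volume ∂τ ∂volume =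
        (∫⁻ x, ∫⁻ v, ∫⁻ h : ℝ,
          ENNReal.ofReal (HitAndRun.flux μ C D x v h) ∂volume ∂τ ∂volume).toReal :=
    fun hC hD => integral_integral_integral_eq_toReal_lintegral
      ((HitAndRun.measurable_flux hμmeas hC hD).comp (measurable_fst.prodMk
        ((measurable_subtype_coe.comp measurable_snd.fst).prodMk measurable_snd.snd)))
      (fun x v h => HitAndRun.flux_nonneg hμnn _ _ x v h) (fun _ => ENNReal.ofReal_ne_top)
      (fun x v => HitAndRun.lintegral_flux_le hμnn _ _ x v)
  simp only [hK']
  change ∫ x, ∫ v, ∫ h : ℝ, HitAndRun.flux μ A B x (↑v) h ∂volume ∂τ ∂volume =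
    ∫ x, ∫ v, ∫ h : ℝ, HitAndRun.flux μ B A x (↑v) h ∂volume ∂τ ∂volume
  rw [h_toReal hA hB, h_toReal hB hA,
    HitAndRun.lintegral_lintegral_lintegral_flux_comm hμmeas hA hB volume τ measurable_subtype_coe]

/-- reversibility of the generalized Hit-and-Run transition kernel
with respect to the target measure with density `μ`. -/
theorem generalized_hit_and_run_reversible {d : ℕ} (hd : 1 ≤ d)
    (μ : EuclideanSpace ℝ (Fin d) → ℝ) (hμmeas : Measurable μ)
    (hμnn : ∀ x, 0 ≤ μ x) (hμint : Integrable μ volume)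
    (τ : Measure (Metric.sphere (0 : EuclideanSpace ℝ (Fin d)) 1))
    [IsProbabilityMeasure τ]
    (Z : EuclideanSpace ℝ (Fin d) → Metric.sphere (0 : EuclideanSpace ℝ (Fin d)) 1 → ℝ≥0∞)
    (hZ : ∀ x v, Z x v = ∫⁻ s : ℝ, ENNReal.ofReal (μ (x + s • (↑v : EuclideanSpace ℝ (Fin d)))))
    (K : EuclideanSpace ℝ (Fin d) → Metric.sphere (0 : EuclideanSpace ℝ (Fin d)) 1 → ℝ → ℝ)
    (hK : ∀ x v h, K x v h =
      if 0 < Z x v ∧ Z x v < ⊤ then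
        μ x * μ (x + h • (↑v : EuclideanSpace ℝ (Fin d))) / (Z x v).toReal
      else 0)
    (A B : Set (EuclideanSpace ℝ (Fin d))) (hA : MeasurableSet A) (hB : MeasurableSet B) :
    ∫ x, ∫ v, ∫ h : ℝ,
        A.indicator (fun _ => (1 : ℝ)) x *
          B.indicator (fun _ => (1 : ℝ)) (x + h • (↑v : EuclideanSpace ℝ (Fin d))) *
          K x v h ∂volume ∂τ ∂volume =
      ∫ x, ∫ v, ∫ h : ℝ,
        B.indicator (fun _ => (1 : ℝ)) x *
          A.indicator (fun _ => (1 : ℝ)) (x + h • (↑v : EuclideanSpace ℝ (Fin d))) *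
          K x v h ∂volume ∂τ ∂volume :=
  generalized_hit_and_run_reversible_general μ hμmeas hμnn τ Z hZ K hK A B hA hB
end

section
/- Let d ≥ m ≥ 1, let A be a real d×m matrix (viewed as a linear map ℝ^m → ℝ^d), let b ∈ ℝ^d, and let x* ∈ ℝ^m satisfy A x* = b. Let τ be a probability measure on the unit sphere 𝕊^{d-1} ⊂ ℝ^d with τ({v : Aᵀv = 0}) = 0, and set ρ = (1/2)·inf over unit vectors ζ ∈ ℝ^m of ∫_{𝕊^{d-1}} ⟨ζ, Aᵀv/‖Aᵀv‖⟩² dτ(v). Define the generalized randomized Kaczmarz update F : 𝕊^{d-1} × ℝ^m → ℝ^m by F(v, x) = Π_{Aᵀv} x + (⟨v, b⟩/‖Aᵀv‖²)·Aᵀv (for Aᵀv ≠ 0), and for x₀ ∈ ℝ^m and k ∈ ℕ define the k-step iterate x_k(v₁,…,v_k) = F(v_k, F(v_{k-1}, … F(v₁, x₀)…)). Then for every x₀ ∈ ℝ^m and every k ∈ ℕ, ( ∫_{(𝕊^{d-1})^k} ‖x_k(v₁,…,v_k) - x*‖² dτ^{⊗k}(v₁,…,v_k) )^{1/2} ≤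 (1 - ρ)^k · ‖x₀ - x*‖. -/
open MeasureTheory
open scoped RealInnerProductSpace

set_option maxHeartbeats 2000000 in
/-- mean-square convergence of the generalized randomized Kaczmarz
algorithm at rate `(1-ρ)^k`, where
`ρ = (1/2) inf_{‖ζ‖=1} ∫ ⟨ζ, Aᵀv/‖Aᵀv‖⟩² dτ(v)`. -/
theorem generalized_kaczmarz_convergence {d m : ℕ} (hm : 1 ≤ m) (hdm : m ≤ d)
    (A : Matrix (Fin d) (Fin m) ℝ) (b : EuclideanSpace ℝ (Fin d))
    (xstar : EuclideanSpace ℝ (Fin m)) (hsol : Matrix.toEuclideanLin A xstar = b)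
    (τ : Measure (Metric.sphere (0 : EuclideanSpace ℝ (Fin d)) 1))
    [IsProbabilityMeasure τ]
    (hτ : τ {v : Metric.sphere (0 : EuclideanSpace ℝ (Fin d)) 1 |
      Matrix.toEuclideanLin (Matrix.transpose A) ↑v = 0} = 0)
    (ρ : ℝ)
    (hρ : ρ = (1 / 2) * ⨅ ζ : {ζ : EuclideanSpace ℝ (Fin m) // ‖ζ‖ = 1},
        ∫ v, ⟪(ζ : EuclideanSpace ℝ (Fin m)),
            ‖Matrix.toEuclideanLin (Matrix.transpose A) ↑v‖⁻¹ •
              Matrix.toEuclideanLin (Matrix.transpose A) ↑v⟫ ^ 2 ∂τ)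
    (F : Metric.sphere (0 : EuclideanSpace ℝ (Fin d)) 1 →
      EuclideanSpace ℝ (Fin m) → EuclideanSpace ℝ (Fin m))
    (hF : ∀ v x, F v x =
      (x - (⟪x, Matrix.toEuclideanLin (Matrix.transpose A) ↑v⟫ /
          ‖Matrix.toEuclideanLin (Matrix.transpose A) ↑v‖ ^ 2) •
            Matrix.toEuclideanLin (Matrix.transpose A) ↑v) +
        (⟪(↑v : EuclideanSpace ℝ (Fin d)), b⟫ /
          ‖Matrix.toEuclideanLin (Matrix.transpose A) ↑v‖ ^ 2) •
            Matrix.toEuclideanLin (Matrix.transpose A) ↑v)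
    (x₀ : EuclideanSpace ℝ (Fin m)) (k : ℕ) :
    Real.sqrt (∫ vs : Fin k → Metric.sphere (0 : EuclideanSpace ℝ (Fin d)) 1,
        ‖(List.ofFn vs).foldl (fun x v => F v x) x₀ - xstar‖ ^ 2
        ∂(Measure.pi fun _ : Fin k => τ)) ≤
      (1 - ρ) ^ k * ‖x₀ - xstar‖ := by
  classical
  set T := Matrix.toEuclideanLin (Matrix.transpose A) with hTdef
  set g : (Metric.sphere (0 : EuclideanSpace ℝ (Fin d)) 1) → EuclideanSpace ℝ (Fin m) := fun v => ‖T ↑v‖⁻¹ • T ↑v with hgdef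
  have hTcont : Continuous T := LinearMap.continuous_of_finiteDimensional _
  -- key identity for the inner product with b
  have hb : ∀ v : (Metric.sphere (0 : EuclideanSpace ℝ (Fin d)) 1), ⟪(↑v : EuclideanSpace ℝ (Fin d)), b⟫ = ⟪xstar, T ↑v⟫ := by
    intro v
    have h : Matrix.conjTranspose A = Matrix.transpose A := by
      ext i j; simp [Matrix.conjTranspose_apply]
    rw [← hsol, hTdef, ← h, Matrix.toEuclideanLin_conjTranspose_eq_adjoint,
      LinearMap.adjoint_inner_right, real_inner_comm]
  -- error recursion identity
  have hkey : ∀ (v : (Metric.sphere (0 : EuclideanSpace ℝ (Fin d)) 1)) (x : EuclideanSpace ℝ (Fin m)),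
      F v x - xstar = (x - xstar) - (⟪x - xstar, T ↑v⟫ / ‖T ↑v‖ ^ 2) • T ↑v := by
    intro v x
    rw [hF, hb, inner_sub_left, sub_div, sub_smul]
    module
  have hnormid : ∀ (w e : EuclideanSpace ℝ (Fin m)),
      ‖e - (⟪e, w⟫ / ‖w‖ ^ 2) • w‖ ^ 2 = ‖e‖ ^ 2 - ⟪e, ‖w‖⁻¹ • w⟫ ^ 2 := by
    intro w e
    by_cases h : w = 0
    · simp [h]
    · have hn : ‖w‖ ≠ 0 := norm_ne_zero_iff.2 h
      rw [norm_sub_sq_real, real_inner_smul_right, real_inner_smul_right, norm_smul,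
        Real.norm_eq_abs, mul_pow, sq_abs]
      field_simp
      ring
  have herr : ∀ (v : (Metric.sphere (0 : EuclideanSpace ℝ (Fin d)) 1)) (x : EuclideanSpace ℝ (Fin m)),
      ‖F v x - xstar‖ ^ 2 = ‖x - xstar‖ ^ 2 - ⟪x - xstar, g v⟫ ^ 2 := by
    intro v x
    rw [hkey, hnormid]
  have hgnorm : ∀ v : (Metric.sphere (0 : EuclideanSpace ℝ (Fin d)) 1), ‖g v‖ ≤ 1 := by
    intro v
    rw [hgdef]
    by_cases h : T ↑v = 0
    · simp [h]
    · have hn : ‖T ↑v‖ ≠ 0 := norm_ne_zero_iff.2 h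
      rw [norm_smul, norm_inv, norm_norm, inv_mul_cancel₀ hn]
  -- contraction pointwise
  have hcontr : ∀ (v : (Metric.sphere (0 : EuclideanSpace ℝ (Fin d)) 1)) (x : EuclideanSpace ℝ (Fin m)),
      ‖F v x - xstar‖ ≤ ‖x - xstar‖ := by
    intro v x
    have h2 : ‖F v x - xstar‖ ^ 2 ≤ ‖x - xstar‖ ^ 2 := by
      rw [herr]; nlinarith [sq_nonneg (⟪x - xstar, g v⟫ : ℝ)]
    nlinarith [norm_nonneg (F v x - xstar), norm_nonneg (x - xstar)]
  -- measurability
  have hwmeas : Measurable (fun v : (Metric.sphere (0 : EuclideanSpace ℝ (Fin d)) 1) => T ↑v) :=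
    (hTcont.comp continuous_subtype_val).measurable
  have hgmeas : Measurable g := (hwmeas.norm.inv).smul hwmeas
  have hinner_meas : ∀ e : EuclideanSpace ℝ (Fin m),
      Measurable (fun v : (Metric.sphere (0 : EuclideanSpace ℝ (Fin d)) 1) => (⟪e, g v⟫ : ℝ) ^ 2) := by
    intro e
    exact (measurable_const.inner hgmeas).pow_const 2
  have hinner_int : ∀ e : EuclideanSpace ℝ (Fin m),
      Integrable (fun v : (Metric.sphere (0 : EuclideanSpace ℝ (Fin d)) 1) => (⟪e, g v⟫ : ℝ) ^ 2) τ := by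
    intro e
    refine (integrable_const (‖e‖ ^ 2)).mono' (hinner_meas e).aestronglyMeasurable
      (Filter.Eventually.of_forall fun v => ?_)
    have h1 : |(⟪e, g v⟫ : ℝ)| ≤ ‖e‖ * ‖g v‖ := abs_real_inner_le_norm e (g v)
    have h2 : ‖e‖ * ‖g v‖ ≤ ‖e‖ * 1 := by
      exact mul_le_mul_of_nonneg_left (hgnorm v) (norm_nonneg e)
    rw [Real.norm_eq_abs, abs_pow]
    calc |(⟪e, g v⟫ : ℝ)| ^ 2 ≤ (‖e‖ * 1) ^ 2 := by
          apply pow_le_pow_left₀ (abs_nonneg _) (h1.trans h2)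
      _ = ‖e‖ ^ 2 := by ring
  -- the infimum
  have hunit : ∃ ζ : EuclideanSpace ℝ (Fin m), ‖ζ‖ = 1 :=
    ⟨EuclideanSpace.single (⟨0, hm⟩ : Fin m) (1 : ℝ), by
      rw [EuclideanSpace.norm_single]; norm_num⟩
  haveI : Nonempty {ζ : EuclideanSpace ℝ (Fin m) // ‖ζ‖ = 1} := ⟨⟨hunit.choose, hunit.choose_spec⟩⟩
  have hbdd : BddBelow (Set.range fun ζ : {ζ : EuclideanSpace ℝ (Fin m) // ‖ζ‖ = 1} =>
      ∫ v, (⟪(ζ : EuclideanSpace ℝ (Fin m)), g v⟫ : ℝ) ^ 2 ∂τ) := by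
    refine ⟨0, ?_⟩
    rintro _ ⟨ζ, rfl⟩
    exact integral_nonneg fun v => sq_nonneg _
  have h2ρ : ∀ ζ : {ζ : EuclideanSpace ℝ (Fin m) // ‖ζ‖ = 1},
      2 * ρ ≤ ∫ v, (⟪(ζ : EuclideanSpace ℝ (Fin m)), g v⟫ : ℝ) ^ 2 ∂τ := by
    intro ζ
    have := ciInf_le hbdd ζ
    rw [hρ]; linarith
  have hρ0 : 0 ≤ ρ := by
    rw [hρ]
    have : (0 : ℝ) ≤ ⨅ ζ : {ζ : EuclideanSpace ℝ (Fin m) // ‖ζ‖ = 1},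
        ∫ v, (⟪(ζ : EuclideanSpace ℝ (Fin m)), g v⟫ : ℝ) ^ 2 ∂τ :=
      le_ciInf fun ζ => integral_nonneg fun v => sq_nonneg _
    linarith
  have hρhalf : ρ ≤ 1 / 2 := by
    obtain ⟨ζ0, hζ0⟩ := hunit
    have h1 : ∫ v, (⟪ζ0, g v⟫ : ℝ) ^ 2 ∂τ ≤ ∫ _ : (Metric.sphere (0 : EuclideanSpace ℝ (Fin d)) 1), (1 : ℝ) ∂τ := by
      refine integral_mono (hinner_int ζ0) (integrable_const 1) fun v => ?_
      have h1 : |(⟪ζ0, g v⟫ : ℝ)| ≤ ‖ζ0‖ * ‖g v‖ := abs_real_inner_le_norm _ _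
      have h2 : ‖ζ0‖ * ‖g v‖ ≤ 1 := by
        rw [hζ0, one_mul]; exact hgnorm v
      have h3 : |(⟪ζ0, g v⟫ : ℝ)| ≤ 1 := h1.trans h2
      calc (⟪ζ0, g v⟫ : ℝ) ^ 2 = |(⟪ζ0, g v⟫ : ℝ)| ^ 2 := (sq_abs _).symm
        _ ≤ 1 ^ 2 := pow_le_pow_left₀ (abs_nonneg _) h3 2
        _ = 1 := one_pow 2
    have h2 : ∫ _ : (Metric.sphere (0 : EuclideanSpace ℝ (Fin d)) 1), (1 : ℝ) ∂τ = 1 := by simp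
    have := h2ρ ⟨ζ0, hζ0⟩
    simp only at this
    linarith
  have h1ρ : 0 ≤ 1 - ρ := by linarith
  -- lower bound on the integral of the squared inner product
  have hlow : ∀ e : EuclideanSpace ℝ (Fin m),
      2 * ρ * ‖e‖ ^ 2 ≤ ∫ v, (⟪e, g v⟫ : ℝ) ^ 2 ∂τ := by
    intro e
    rcases eq_or_ne e 0 with he | he
    · have h0 : 2 * ρ * ‖e‖ ^ 2 = 0 := by rw [he]; simp
      rw [h0]
      exact integral_nonneg fun v => sq_nonneg _
    · have hne : ‖e‖ ≠ 0 := norm_ne_zero_iff.2 he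
      set ζ : EuclideanSpace ℝ (Fin m) := ‖e‖⁻¹ • e with hζdef
      have hζ : ‖ζ‖ = 1 := norm_smul_inv_norm he
      have hsq : ∀ v : (Metric.sphere (0 : EuclideanSpace ℝ (Fin d)) 1), (⟪e, g v⟫ : ℝ) ^ 2 = ‖e‖ ^ 2 * (⟪ζ, g v⟫ : ℝ) ^ 2 := by
        intro v
        rw [hζdef, real_inner_smul_left]
        field_simp
      calc 2 * ρ * ‖e‖ ^ 2 ≤ (∫ v, (⟪ζ, g v⟫ : ℝ) ^ 2 ∂τ) * ‖e‖ ^ 2 := by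
            apply mul_le_mul_of_nonneg_right (h2ρ ⟨ζ, hζ⟩) (sq_nonneg _)
        _ = ∫ v, (⟪e, g v⟫ : ℝ) ^ 2 ∂τ := by
            rw [← integral_mul_const]
            refine integral_congr_ae (Filter.Eventually.of_forall fun v => ?_)
            show (⟪ζ, g v⟫ : ℝ) ^ 2 * ‖e‖ ^ 2 = (⟪e, g v⟫ : ℝ) ^ 2
            rw [hsq v]; ring
  -- one-step bound
  have hstep : ∀ x : EuclideanSpace ℝ (Fin m),
      ∫ v, ‖F v x - xstar‖ ^ 2 ∂τ ≤ (1 - ρ) ^ 2 * ‖x - xstar‖ ^ 2 := by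
    intro x
    have hrw : ∫ v, ‖F v x - xstar‖ ^ 2 ∂τ
        = ‖x - xstar‖ ^ 2 - ∫ v, (⟪x - xstar, g v⟫ : ℝ) ^ 2 ∂τ := by
      have h1 : ∫ v, ‖F v x - xstar‖ ^ 2 ∂τ
          = ∫ v, (‖x - xstar‖ ^ 2 - (⟪x - xstar, g v⟫ : ℝ) ^ 2) ∂τ :=
        integral_congr_ae (Filter.Eventually.of_forall fun v => herr v x)
      rw [h1, integral_sub (integrable_const _) (hinner_int _), integral_const]
      simp
    rw [hrw]
    have := hlow (x - xstar)
    nlinarith [sq_nonneg ρ, sq_nonneg ‖x - xstar‖,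
      mul_nonneg (mul_nonneg hρ0 hρ0) (sq_nonneg ‖x - xstar‖)]
  -- measurability of F and iterates
  have hFmeas : Measurable (fun p : (Metric.sphere (0 : EuclideanSpace ℝ (Fin d)) 1) × EuclideanSpace ℝ (Fin m) => F p.1 p.2) := by
    have heq : (fun p : (Metric.sphere (0 : EuclideanSpace ℝ (Fin d)) 1) × EuclideanSpace ℝ (Fin m) => F p.1 p.2) = fun p =>
        (p.2 - (⟪p.2, T ↑p.1⟫ / ‖T ↑p.1‖ ^ 2) • T ↑p.1) +
          (⟪(↑p.1 : EuclideanSpace ℝ (Fin d)), b⟫ / ‖T ↑p.1‖ ^ 2) • T ↑p.1 :=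
      funext fun p => hF p.1 p.2
    rw [heq]
    have hw : Measurable (fun p : (Metric.sphere (0 : EuclideanSpace ℝ (Fin d)) 1) × EuclideanSpace ℝ (Fin m) => T ↑p.1) :=
      hwmeas.comp measurable_fst
    have hnv : Measurable (fun p : (Metric.sphere (0 : EuclideanSpace ℝ (Fin d)) 1) × EuclideanSpace ℝ (Fin m) => (‖T ↑p.1‖ ^ 2)⁻¹) :=
      (hw.norm.pow_const 2).inv
    have hv : Measurable fun p : (Metric.sphere (0 : EuclideanSpace ℝ (Fin d)) 1) × EuclideanSpace ℝ (Fin m) =>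
        (↑p.1 : EuclideanSpace ℝ (Fin d)) :=
      continuous_subtype_val.measurable.comp measurable_fst
    refine Measurable.add (Measurable.sub measurable_snd ?_) ?_
    · simp only [div_eq_mul_inv]
      exact ((measurable_snd.inner hw).mul hnv).smul hw
    · simp only [div_eq_mul_inv]
      exact ((hv.inner measurable_const).mul hnv).smul hw
  have hXmeas : ∀ n : ℕ, Measurable (fun p : (Fin n → (Metric.sphere (0 : EuclideanSpace ℝ (Fin d)) 1)) × EuclideanSpace ℝ (Fin m) =>
      (List.ofFn p.1).foldl (fun x v => F v x) p.2) := by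
    intro n
    induction n with
    | zero => simpa using measurable_snd
    | succ n ih =>
      have heq : (fun p : (Fin (n + 1) → (Metric.sphere (0 : EuclideanSpace ℝ (Fin d)) 1)) × EuclideanSpace ℝ (Fin m) =>
          (List.ofFn p.1).foldl (fun x v => F v x) p.2) = fun p =>
          (List.ofFn (fun i : Fin n => p.1 i.succ)).foldl (fun x v => F v x) (F (p.1 0) p.2) := by
        funext p
        rw [List.ofFn_succ, List.foldl_cons]
      rw [heq]
      have hp1 : Measurable fun p : (Fin (n + 1) → (Metric.sphere (0 : EuclideanSpace ℝ (Fin d)) 1)) × EuclideanSpace ℝ (Fin m) =>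
          ((fun i : Fin n => p.1 i.succ, F (p.1 0) p.2) :
            (Fin n → (Metric.sphere (0 : EuclideanSpace ℝ (Fin d)) 1)) × EuclideanSpace ℝ (Fin m)) := by
        refine Measurable.prodMk ?_ ?_
        · exact measurable_pi_lambda _ fun i => (measurable_pi_apply i.succ).comp measurable_fst
        · have hq : Measurable fun p : (Fin (n + 1) → (Metric.sphere (0 : EuclideanSpace ℝ (Fin d)) 1)) × EuclideanSpace ℝ (Fin m) =>
              ((p.1 0, p.2) : (Metric.sphere (0 : EuclideanSpace ℝ (Fin d)) 1) × EuclideanSpace ℝ (Fin m)) :=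
            Measurable.prodMk ((measurable_pi_apply 0).comp measurable_fst) measurable_snd
          exact hFmeas.comp hq
      exact ih.comp hp1
  -- uniform bound on iterates
  have hXbound : ∀ (l : List (Metric.sphere (0 : EuclideanSpace ℝ (Fin d)) 1)) (x : EuclideanSpace ℝ (Fin m)),
      ‖l.foldl (fun x v => F v x) x - xstar‖ ≤ ‖x - xstar‖ := by
    intro l
    induction l with
    | nil => intro x; simp
    | cons v l ih =>
      intro x
      rw [List.foldl_cons]
      exact (ih (F v x)).trans (hcontr v x)
  -- main induction
  have hmain : ∀ (n : ℕ) (x : EuclideanSpace ℝ (Fin m)),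
      ∫ vs : Fin n → (Metric.sphere (0 : EuclideanSpace ℝ (Fin d)) 1), ‖(List.ofFn vs).foldl (fun x v => F v x) x - xstar‖ ^ 2
        ∂(Measure.pi fun _ : Fin n => τ) ≤ ((1 - ρ) ^ 2) ^ n * ‖x - xstar‖ ^ 2 := by
    intro n
    induction n with
    | zero =>
      intro x
      simp
    | succ n ih =>
      intro x
      have hmp := measurePreserving_piFinSuccAbove (fun _ : Fin (n + 1) => τ) 0
      set e := MeasurableEquiv.piFinSuccAbove (fun _ : Fin (n + 1) => (Metric.sphere (0 : EuclideanSpace ℝ (Fin d)) 1)) 0 with hedef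
      set G : (Metric.sphere (0 : EuclideanSpace ℝ (Fin d)) 1) × (Fin n → (Metric.sphere (0 : EuclideanSpace ℝ (Fin d)) 1)) → ℝ := fun p =>
        ‖(List.ofFn p.2).foldl (fun x v => F v x) (F p.1 x) - xstar‖ ^ 2 with hGdef
      have hcomp : ∀ vs : Fin (n + 1) → (Metric.sphere (0 : EuclideanSpace ℝ (Fin d)) 1),
          ‖(List.ofFn vs).foldl (fun x v => F v x) x - xstar‖ ^ 2 = G (e vs) := by
        intro vs
        have h1 : (e vs).1 = vs 0 := rfl
        have h2 : (e vs).2 = fun i : Fin n => vs ((0 : Fin (n + 1)).succAbove i) := rfl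
        rw [hGdef]
        simp only [h1, h2, Fin.zero_succAbove]
        rw [List.ofFn_succ, List.foldl_cons]
      have hGmeas : Measurable G := by
        rw [hGdef]
        exact ((hXmeas n).comp (measurable_snd.prodMk
          (hFmeas.comp (measurable_fst.prodMk measurable_const)))).sub_const xstar
          |>.norm.pow_const 2
      have hGint : Integrable G ((τ : Measure (Metric.sphere (0 : EuclideanSpace ℝ (Fin d)) 1)).prod (Measure.pi fun _ : Fin n => τ)) := by
        refine (integrable_const (‖x - xstar‖ ^ 2)).mono' hGmeas.aestronglyMeasurable
          (Filter.Eventually.of_forall fun p => ?_)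
        rw [Real.norm_eq_abs, abs_pow, abs_norm]
        have := (hXbound (List.ofFn p.2) (F p.1 x)).trans (hcontr p.1 x)
        exact pow_le_pow_left₀ (norm_nonneg _) this 2
      calc ∫ vs : Fin (n + 1) → (Metric.sphere (0 : EuclideanSpace ℝ (Fin d)) 1), ‖(List.ofFn vs).foldl (fun x v => F v x) x - xstar‖ ^ 2
              ∂(Measure.pi fun _ : Fin (n + 1) => τ)
          = ∫ p, G p ∂((τ : Measure (Metric.sphere (0 : EuclideanSpace ℝ (Fin d)) 1)).prod (Measure.pi fun _ : Fin n => τ)) := by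
            rw [← hmp.integral_comp e.measurableEmbedding G]
            exact integral_congr_ae (Filter.Eventually.of_forall fun vs => hcomp vs)
        _ = ∫ a, ∫ f, G (a, f) ∂(Measure.pi fun _ : Fin n => τ) ∂τ := integral_prod G hGint
        _ ≤ ∫ a, ((1 - ρ) ^ 2) ^ n * ‖F a x - xstar‖ ^ 2 ∂τ := by
            refine integral_mono_of_nonneg
              (Filter.Eventually.of_forall fun a => integral_nonneg fun f => sq_nonneg _)
              ?_ (Filter.Eventually.of_forall fun a => ih (F a x))
            have : Integrable (fun a : (Metric.sphere (0 : EuclideanSpace ℝ (Fin d)) 1) => ‖F a x - xstar‖ ^ 2) τ := by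
              have heq2 : (fun a : (Metric.sphere (0 : EuclideanSpace ℝ (Fin d)) 1) => ‖F a x - xstar‖ ^ 2)
                  = fun a => ‖x - xstar‖ ^ 2 - (⟪x - xstar, g a⟫ : ℝ) ^ 2 :=
                funext fun a => herr a x
              rw [heq2]
              exact (integrable_const _).sub (hinner_int _)
            exact this.const_mul _
        _ = ((1 - ρ) ^ 2) ^ n * ∫ a, ‖F a x - xstar‖ ^ 2 ∂τ := integral_const_mul _ _
        _ ≤ ((1 - ρ) ^ 2) ^ n * ((1 - ρ) ^ 2 * ‖x - xstar‖ ^ 2) := by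
            exact mul_le_mul_of_nonneg_left (hstep x) (pow_nonneg (sq_nonneg _) n)
        _ = ((1 - ρ) ^ 2) ^ (n + 1) * ‖x - xstar‖ ^ 2 := by ring
  -- conclusion
  have hfin := hmain k x₀
  have hsqrt : Real.sqrt (((1 - ρ) ^ 2) ^ k * ‖x₀ - xstar‖ ^ 2)
      = (1 - ρ) ^ k * ‖x₀ - xstar‖ := by
    have h1 : ((1 - ρ) ^ 2) ^ k * ‖x₀ - xstar‖ ^ 2 = ((1 - ρ) ^ k * ‖x₀ - xstar‖) ^ 2 := by
      rw [mul_pow, ← pow_mul, ← pow_mul, mul_comm 2 k]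
    rw [h1, Real.sqrt_sq (mul_nonneg (pow_nonneg h1ρ k) (norm_nonneg _))]
  calc Real.sqrt (∫ vs : Fin k → (Metric.sphere (0 : EuclideanSpace ℝ (Fin d)) 1),
          ‖(List.ofFn vs).foldl (fun x v => F v x) x₀ - xstar‖ ^ 2
          ∂(Measure.pi fun _ : Fin k => τ))
      ≤ Real.sqrt (((1 - ρ) ^ 2) ^ k * ‖x₀ - xstar‖ ^ 2) := Real.sqrt_le_sqrt hfin
    _ = (1 - ρ) ^ k * ‖x₀ - xstar‖ := hsqrt
end

section
/- Let d ≥ 2, let 𝒞 be a symmetric positive definite d×d real matrix with B = 𝒞^{-1/2}, and let M be the largest eigenvalue of 𝒞^{-1}. Fix x ∈ ℝ^d, and for v ∈ 𝕊^{d-1} let μ_{x,v} be the one-dimensional Gaussian measure with mean -⟨Bx, Bv⟩/‖Bv‖² and variance ‖Bv‖^{-2}. Then for every ε ∈ (0,1], ∫_{𝕊^{d-1}} ∫_{[-ε,ε]} log(1/|h|) dμ_{x,v}(h) dσ_{d-1}(v) ≤ 2·ε·(1 - log ε)·M^{1/2}. -/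
/-!
Along a direction `v`, the Gaussian `μ_{x,v}` has density at most `‖Bv‖ / √(2π) ≤ ‖Bv‖`, and
`‖Bv‖² = ⟪𝒞⁻¹ v, v⟫ ≤ M` for a unit vector `v`. Since `log (1/|h|) ≥ 0` on `[-ε, ε]` with
integral `2ε(1 - log ε)`, every inner integral is at most `2ε(1 - log ε)√M`, and averaging over
the sphere, a measure of mass at most one, keeps this bound.
-/

open MeasureTheory ProbabilityTheory
open scoped RealInnerProductSpace ENNReal

/-- The uniform (normalized) probability measure on the unit sphere of `ℝ^d`. -/
noncomputable def sphereUniform (d : ℕ) :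
    Measure (Metric.sphere (0 : EuclideanSpace ℝ (Fin d)) 1) :=
  ((volume : Measure (EuclideanSpace ℝ (Fin d))).toSphere Set.univ)⁻¹ •
    (volume : Measure (EuclideanSpace ℝ (Fin d))).toSphere

open Set Real Matrix

section LogKernel

lemma log_one_div_abs_eq_neg_log (x : ℝ) : log (1 / |x|) = -log x := by
  rw [one_div, log_inv, log_abs]

lemma log_one_div_abs_nonneg {x : ℝ} (hx : |x| ≤ 1) : 0 ≤ log (1 / |x|) := by
  rw [one_div, log_inv, neg_nonneg]
  exact log_nonpos (abs_nonneg x) hx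

lemma integrableOn_log_one_div_abs_Icc {ε : ℝ} (hε : 0 ≤ ε) :
    IntegrableOn (fun x : ℝ => log (1 / |x|)) (Icc (-ε) ε) := by
  simp_rw [log_one_div_abs_eq_neg_log]
  rw [integrableOn_Icc_iff_integrableOn_Ioc,
    ← intervalIntegrable_iff_integrableOn_Ioc_of_le (by linarith)]
  exact intervalIntegral.intervalIntegrable_log'.neg

lemma integral_log_one_div_abs_Icc {ε : ℝ} (hε : 0 ≤ ε) :
    ∫ x in Icc (-ε) ε, log (1 / |x|) = 2 * ε * (1 - log ε) := by
  simp_rw [log_one_div_abs_eq_neg_log]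
  rw [integral_Icc_eq_integral_Ioc, ← intervalIntegral.integral_of_le (by linarith),
    intervalIntegral.integral_neg, integral_log, log_neg_eq_log]
  ring

lemma two_mul_mul_one_sub_log_nonneg {ε : ℝ} (hε : ε ∈ Ioc (0 : ℝ) 1) :
    0 ≤ 2 * ε * (1 - log ε) := by
  nlinarith [hε.1, log_nonpos hε.1.le hε.2]

end LogKernel

section Gaussian

open scoped NNReal

lemma gaussianPDFReal_le (m : ℝ) (v : ℝ≥0) (x : ℝ) :
    gaussianPDFReal m v x ≤ (√(2 * π * v))⁻¹ := by
  rw [gaussianPDFReal_def]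
  refine mul_le_of_le_one_right (by positivity) (exp_le_one_iff.2 ?_)
  exact div_nonpos_of_nonpos_of_nonneg (neg_nonpos.2 (sq_nonneg _)) (by positivity)

lemma setIntegral_gaussianReal_le {m : ℝ} {v : ℝ≥0} (hv : v ≠ 0) {f : ℝ → ℝ} {s : Set ℝ}
    (hs : MeasurableSet s) (hf : IntegrableOn f s) (hf₀ : ∀ x ∈ s, 0 ≤ f x) :
    ∫ x in s, f x ∂gaussianReal m v ≤ (√(2 * π * v))⁻¹ * ∫ x in s, f x := by
  have hind₀ : ∀ x, 0 ≤ s.indicator f x := fun x => indicator_nonneg hf₀ x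
  rw [← integral_indicator hs, ← integral_indicator hs, ← integral_const_mul,
    integral_gaussianReal_eq_integral_smul hv]
  refine integral_mono_of_nonneg (ae_of_all _ fun x => ?_)
    (((integrable_indicator_iff hs).2 hf).const_mul _) (ae_of_all _ fun x => ?_)
  · exact smul_nonneg (gaussianPDFReal_nonneg m v x) (hind₀ x)
  · exact mul_le_mul_of_nonneg_right (gaussianPDFReal_le m v x) (hind₀ x)

lemma inv_sqrt_two_pi_mul_inv_sq_le {c : ℝ} (hc : 0 < c) :
    (√(2 * π * ((c ^ 2)⁻¹).toNNReal))⁻¹ ≤ c := by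
  rw [Real.coe_toNNReal _ (by positivity), sqrt_mul (by positivity), sqrt_inv,
    sqrt_sq hc.le, mul_inv, inv_inv]
  refine mul_le_of_le_one_left hc.le (inv_le_one_of_one_le₀ ?_)
  exact one_le_sqrt.2 (by linarith [pi_gt_three])

lemma setIntegral_log_one_div_abs_gaussianReal_le (m : ℝ) {c : ℝ} (hc : 0 < c) {ε : ℝ}
    (hε : ε ∈ Ioc (0 : ℝ) 1) :
    ∫ h in Icc (-ε) ε, log (1 / |h|) ∂gaussianReal m ((c ^ 2)⁻¹).toNNReal ≤
      2 * ε * (1 - log ε) * c := by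
  have hv : ((c ^ 2)⁻¹).toNNReal ≠ 0 := by simpa using hc.ne'
  have hK := two_mul_mul_one_sub_log_nonneg hε
  calc _ ≤ (√(2 * π * ((c ^ 2)⁻¹).toNNReal))⁻¹ * ∫ h in Icc (-ε) ε, log (1 / |h|) :=
        setIntegral_gaussianReal_le hv measurableSet_Icc
          (integrableOn_log_one_div_abs_Icc hε.1.le)
          fun h hh => log_one_div_abs_nonneg (abs_le.2 hh |>.trans hε.2)
    _ ≤ c * (2 * ε * (1 - log ε)) := by
        rw [integral_log_one_div_abs_Icc hε.1.le]
        exact mul_le_mul_of_nonneg_right (inv_sqrt_two_pi_mul_inv_sq_le hc) hK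
    _ = 2 * ε * (1 - log ε) * c := mul_comm _ _

end Gaussian

lemma Matrix.norm_toEuclideanLin_sq_eq_inner {d : ℕ} {A B : Matrix (Fin d) (Fin d) ℝ}
    (hB : B.IsHermitian) (hBA : B * B = A) (z : EuclideanSpace ℝ (Fin d)) :
    ‖toEuclideanLin B z‖ ^ 2 = ⟪toEuclideanLin A z, z⟫ := by
  have hsymm : (toEuclideanLin B).IsSymmetric := isSymmetric_toEuclideanLin_iff.2 hB
  have hA : toEuclideanLin A z = toEuclideanLin B (toEuclideanLin B z) := by
    simp [← hBA, toLpLin_apply, mulVec_mulVec]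
  rw [hA, hsymm, real_inner_self_eq_norm_sq]

lemma Matrix.PosDef.toEuclideanLin_ne_zero {d : ℕ} {B : Matrix (Fin d) (Fin d) ℝ}
    (hB : B.PosDef) {z : EuclideanSpace ℝ (Fin d)} (hz : z ≠ 0) : toEuclideanLin B z ≠ 0 := by
  intro hBz
  have : B *ᵥ z.ofLp = B *ᵥ 0 := by
    rw [mulVec_zero]; exact congrArg WithLp.ofLp hBz
  exact hz (WithLp.ofLp_injective 2 (mulVec_injective_iff_isUnit.2 hB.isUnit this))

lemma sphereUniform_univ_le_one (d : ℕ) : sphereUniform d univ ≤ 1 := by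
  rw [sphereUniform, Measure.smul_apply, smul_eq_mul]
  exact ENNReal.inv_mul_le_one _

instance (d : ℕ) : IsFiniteMeasure (sphereUniform d) :=
  ⟨(sphereUniform_univ_le_one d).trans_lt ENNReal.one_lt_top⟩

lemma MeasureTheory.integral_le_of_forall_le_of_measure_univ_le_one {α : Type*}
    [MeasurableSpace α] {μ : Measure α} [IsFiniteMeasure μ] (hμ : μ univ ≤ 1) {f : α → ℝ}
    {K : ℝ} (hK : 0 ≤ K) (hf : ∀ a, f a ≤ K) : ∫ a, f a ∂μ ≤ K := by
  by_cases hint : Integrable f μ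
  · calc ∫ a, f a ∂μ ≤ ∫ _, K ∂μ := integral_mono hint (integrable_const K) hf
      _ = μ.real univ * K := by rw [integral_const, smul_eq_mul]
      _ ≤ K := mul_le_of_le_one_left hK (ENNReal.toReal_le_of_le_ofReal zero_le_one
          (by simpa using hμ))
  · rw [integral_undef hint]; exact hK

theorem hit_and_run_log_overlap_bound_general {d : ℕ}
    (C B : Matrix (Fin d) (Fin d) ℝ) (hB : B.PosDef)
    (hBC : B * B = C⁻¹) (M : ℝ)
    (hM : IsGreatest {r : ℝ | ∃ z : EuclideanSpace ℝ (Fin d), ‖z‖ = 1 ∧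
      ⟪Matrix.toEuclideanLin C⁻¹ z, z⟫ = r} M)
    (x : EuclideanSpace ℝ (Fin d)) (ε : ℝ) (hε : ε ∈ Set.Ioc (0 : ℝ) 1) :
    ∫ v, (∫ h in Set.Icc (-ε) ε, Real.log (1 / |h|)
        ∂gaussianReal
          (-⟪Matrix.toEuclideanLin B x, Matrix.toEuclideanLin B ↑v⟫ /
            ‖Matrix.toEuclideanLin B ↑v‖ ^ 2)
          ((‖Matrix.toEuclideanLin B ↑v‖ ^ 2)⁻¹).toNNReal) ∂sphereUniform d ≤
      2 * ε * (1 - Real.log ε) * Real.sqrt M := by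
  have hK := two_mul_mul_one_sub_log_nonneg hε
  refine integral_le_of_forall_le_of_measure_univ_le_one (sphereUniform_univ_le_one d)
    (mul_nonneg hK (sqrt_nonneg M)) fun v => ?_
  have hv : ‖(v : EuclideanSpace ℝ (Fin d))‖ = 1 := mem_sphere_zero_iff_norm.1 v.2
  have hc : 0 < ‖toEuclideanLin B v‖ :=
    norm_pos_iff.2 (hB.toEuclideanLin_ne_zero (norm_ne_zero_iff.1 (by simp [hv])))
  have hcM : ‖toEuclideanLin B v‖ ≤ √M := by
    refine le_sqrt_of_sq_le ?_
    rw [norm_toEuclideanLin_sq_eq_inner hB.isHermitian hBC]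
    exact hM.2 ⟨v, hv, rfl⟩
  calc _ ≤ 2 * ε * (1 - log ε) * ‖toEuclideanLin B v‖ :=
        setIntegral_log_one_div_abs_gaussianReal_le _ hc hε
    _ ≤ 2 * ε * (1 - log ε) * √M := mul_le_mul_of_nonneg_left hcM hK

/-- averaged logarithmic bound for the scalar displacement distribution of
Hit-and-Run in a Gaussian target; `M` is the largest eigenvalue of `𝒞⁻¹` (characterized
as the greatest Rayleigh-quotient value). -/
theorem hit_and_run_log_overlap_bound {d : ℕ} (hd : 2 ≤ d)
    (C B : Matrix (Fin d) (Fin d) ℝ) (hC : C.PosDef) (hB : B.PosDef)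
    (hBC : B * B = C⁻¹) (M : ℝ)
    (hM : IsGreatest {r : ℝ | ∃ z : EuclideanSpace ℝ (Fin d), ‖z‖ = 1 ∧
      ⟪Matrix.toEuclideanLin C⁻¹ z, z⟫ = r} M)
    (x : EuclideanSpace ℝ (Fin d)) (ε : ℝ) (hε : ε ∈ Set.Ioc (0 : ℝ) 1) :
    ∫ v, (∫ h in Set.Icc (-ε) ε, Real.log (1 / |h|)
        ∂gaussianReal
          (-⟪Matrix.toEuclideanLin B x, Matrix.toEuclideanLin B ↑v⟫ /
            ‖Matrix.toEuclideanLin B ↑v‖ ^ 2)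
          ((‖Matrix.toEuclideanLin B ↑v‖ ^ 2)⁻¹).toNNReal) ∂sphereUniform d ≤
      2 * ε * (1 - Real.log ε) * Real.sqrt M :=
  hit_and_run_log_overlap_bound_general C B hB hBC M hM x ε hε
end
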